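/- Let μ be a belief on ℍ, h_E a high-security input, and ℓ_E a low-security input. Then BE[⟨μ,h_E,ℓ_E⟩](M) = −log₂ Σ_{h ∈ {h' | M(h',ℓ_E) = M(h_E,ℓ_E)}} μ(h). -/
import Mathlib


/-!
Statement 5: For a belief `μ` on `ℍ`, a high input `h_E` and a low input `ℓ_E`,
`BE[⟨μ,h_E,ℓ_E⟩](M) = −log₂ Σ_{h : M(h,ℓ_E) = M(h_E,ℓ_E)} μ(h)`.
-/

variable {Hi Li Oi : Type*}

/-- Relative entropy (distance) `D(μ → μ') = Σ_h μ'(h) · log₂(μ'(h)/μ(h))`. -/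
noncomputable def relD {X : Type*} [Fintype X] (μ μ' : X → ℝ) : ℝ :=
  ∑ x, μ' x * Real.logb 2 (μ' x / μ x)

/-- The point-mass distribution `ḣ` at `h`. -/
noncomputable def pointMass {X : Type*} [DecidableEq X] (h : X) : X → ℝ :=
  fun h' => if h = h' then 1 else 0

/-- The updated belief `μ|o_E`: `(μ|o_E)(h) = μ(h)/μ_{ℓ_E}(o_E)` if
`M(h,ℓ_E) = o_E` and `0` otherwise, where `μ_{ℓ_E}(o_E) = Σ_{M(h,ℓ_E)=o_E} μ(h)`. -/
noncomputable def postBelief [Fintype Hi] [DecidableEq Oi]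
    (M : Hi × Li → Oi) (μ : Hi → ℝ) (ℓE : Li) (oE : Oi) : Hi → ℝ :=
  fun h => if M (h, ℓE) = oE then μ h / (∑ h', if M (h', ℓE) = oE then μ h' else 0) else 0

/-- Belief-based quantitative information flow
`BE[⟨μ,h_E,ℓ_E⟩](M) = D(μ → ḣ_E) − D(μ|o_E → ḣ_E)` with `o_E = M(h_E,ℓ_E)`. -/
noncomputable def BE [Fintype Hi] [DecidableEq Hi] [DecidableEq Oi]
    (M : Hi × Li → Oi) (μ : Hi → ℝ) (hE : Hi) (ℓE : Li) : ℝ :=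
  relD μ (pointMass hE) - relD (postBelief M μ ℓE (M (hE, ℓE))) (pointMass hE)

/-- `BE[⟨μ,h_E,ℓ_E⟩](M)` equals the self-information
`−log₂ Σ_{h : M(h,ℓ_E)=M(h_E,ℓ_E)} μ(h)`. -/

lemma relD_pointMass {X : Type*} [Fintype X] [DecidableEq X] (μ : X → ℝ) (h : X) :
    relD μ (pointMass h) = -Real.logb 2 (μ h) := by
  unfold relD pointMass
  rw [Finset.sum_eq_single h]
  · simp [Real.logb, Real.log_div, Real.log_inv]
    ring
  · intro b _ hb
    simp [Ne.symm hb]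
  · simp

theorem BE_eq_neg_logb
    [Fintype Hi] [Fintype Li] [Fintype Oi] [DecidableEq Hi] [DecidableEq Oi]
    [Nonempty Hi] [Nonempty Li]
    (M : Hi × Li → Oi) (μ : Hi → ℝ)
    (hpos : ∀ h, 0 < μ h) (hsum : ∑ h, μ h = 1) (hE : Hi) (ℓE : Li) :
    BE M μ hE ℓE =
      -Real.logb 2 (∑ h, if M (h, ℓE) = M (hE, ℓE) then μ h else 0) := by
  set S := ∑ h, if M (h, ℓE) = M (hE, ℓE) then μ h else 0 with hS
  have hSpos : 0 < S := by
    rw [hS]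
    apply Finset.sum_pos'
    · intro i _; split <;> [exact (hpos i).le; rfl]
    · exact ⟨hE, Finset.mem_univ hE, by simp [hpos hE]⟩
  have hpost : postBelief M μ ℓE (M (hE, ℓE)) hE = μ hE / S := by
    simp [postBelief, hS]
  rw [BE, relD_pointMass, relD_pointMass, hpost, Real.logb_div (hpos hE).ne' hSpos.ne']
  ring
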